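/- arXiv:1709.02267 — 2 statements merged into one kernel-verified Lean document; each statement's English description precedes it below -/
import Mathlib

section
/- Let A ⊆ ℝ² be a Jordan domain with Lipschitz-regular boundary, let i ∈ {1,2} (with B¹ = A, B² = A*), let r₀ > 0, and let F : ℝ² → ℝ² be measurable and continuous on B^i ∩ (∂A)_{⊕r₀}. Then for H¹-almost every q ∈ ∂A and every s ∈ [−1,1], r⁻¹ G^i_{r,D}(s,q) → (−1)^i · 2√(1−s²) · (F(q)·u_A(q)) as r ↓ 0. -/
open MeasureTheory Filter Set Metric

noncomputable section

abbrev V2 : Type := EuclideanSpace ℝ (Fin 2)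

/-- The unit vector `(cos θ, sin θ)`. -/
def uvec (θ : ℝ) : V2 := !₂[Real.cos θ, Real.sin θ]

/-- The unit vector `(-sin θ, cos θ)`, perpendicular to `uvec θ`. -/
def uperp (θ : ℝ) : V2 := !₂[-Real.sin θ, Real.cos θ]

/-- The counterclockwise perpendicular `x^⊥ = (-x₂, x₁)`. -/
def perpv (v : V2) : V2 := !₂[-(v 1), v 0]

/-- The tangent cone of `S` at `p`. -/
def TanCone (S : Set V2) (p : V2) : Set V2 :=
  {v | ∃ ps : ℕ → V2, (∀ n, ps n ∈ S \ {p}) ∧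
    Tendsto ps atTop (nhds p) ∧
    Tendsto (fun n => ‖ps n - p‖⁻¹ • (ps n - p)) atTop (nhds (‖v‖⁻¹ • v))}

/-- The normal cone of `S` at `p`. -/
def NorCone (S : Set V2) (p : V2) : Set V2 :=
  {u | ∀ v ∈ TanCone S p, (inner ℝ u v : ℝ) ≤ 0}

/-- `C` is a Jordan curve. -/
def IsJordanCurve (C : Set V2) : Prop :=
  C.Nonempty ∧ ∃ φ : ℝ → V2, ContinuousOn φ (Icc 0 1) ∧ InjOn φ (Ioo 0 1) ∧
    φ 0 = φ 1 ∧ φ '' Icc 0 1 = C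

/-- `A` is a Jordan domain. -/
def IsJordanDomain (A : Set V2) : Prop :=
  IsCompact A ∧ IsConnected (interior A) ∧ IsJordanCurve (frontier A)

/-- `q` is a regular boundary point of `A`, with outward unit normal `uA q`. -/
def RegularAt (A : Set V2) (uA : V2 → V2) (q : V2) : Prop :=
  ‖uA q‖ = 1 ∧ (∀ v ∈ TanCone (frontier A) q, (inner ℝ (uA q) v : ℝ) = 0) ∧
  NorCone A q = {w | ∃ l : ℝ, 0 ≤ l ∧ w = l • uA q} ∧
  NorCone (closure Aᶜ) q = {w | ∃ l : ℝ, 0 ≤ l ∧ w = -(l • uA q)}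

/-- The Jordan domain `A` has Lipschitz-regular boundary, with outward unit
normal field `uA` (set to `0` at the `H¹`-null set of irregular points). -/
def LipschitzRegular (A : Set V2) (uA : V2 → V2) : Prop :=
  (∃ (K : NNReal) (φ : ℝ → V2), LipschitzOnWith K φ (Icc 0 1) ∧ InjOn φ (Ioo 0 1) ∧
    φ 0 = φ 1 ∧ φ '' Icc 0 1 = frontier A) ∧
  (∀ q ∈ frontier A, RegularAt A uA q ∨ uA q = 0) ∧
  μH[1] {q | q ∈ frontier A ∧ ¬ RegularAt A uA q} = 0

/-- `B¹ = A`, `B² = A* = closure Aᶜ`. -/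
def Bset (A : Set V2) (i : ℕ) : Set V2 := if i = 1 then A else closure Aᶜ

/-- The circle flux `G^i_{r,D}(s,q)`. -/
def GD (A : Set V2) (uA : V2 → V2) (F : V2 → V2) (i : ℕ) (r s : ℝ) (q : V2) : ℝ :=
  r * ∫ θ in (0:ℝ)..(2 * Real.pi),
    (Bset A i).indicator (fun x => (inner ℝ (F x) (uvec θ) : ℝ))
      (q + (r * s) • uA q + r • uvec θ)

/-- The circle circulation `G^i_{r,C}(s,q)`. -/
def GC (A : Set V2) (uA : V2 → V2) (F : V2 → V2) (i : ℕ) (r s : ℝ) (q : V2) : ℝ :=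
  r * ∫ θ in (0:ℝ)..(2 * Real.pi),
    (Bset A i).indicator (fun x => (inner ℝ (F x) (uperp θ) : ℝ))
      (q + (r * s) • uA q + r • uvec θ)

end

/-!
At a regular boundary point `q` write `uA q = u(α)`. The normal cones of `A` and `A*` at `q`
say that near `q`, `A` lies asymptotically in the half-plane `⟪uA q, x - q⟫ ≤ 0` and `A*` in
`⟪uA q, x - q⟫ ≥ 0`. The point `x = q + r s uA q + r u(θ)` has
`⟪uA q, x - q⟫ = r (s + cos (θ - α))`, so for every `θ` off the null set where
`s + cos (θ - α) = 0`, the point `x` lies in `B^i`, or outside it, for all small `r`, according to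
the sign of `(-1)^i (s + cos (θ - α))`. Since `F` is bounded near `q`, dominated convergence turns
`r⁻¹ G^i_{r,D}(s,q)` into the integral of `⟪F q, u(θ)⟫` over the arc where that sign is
nonnegative, and rotating the arc to be symmetric about `θ = 0` evaluates it as
`(-1)^i 2 √(1 - s²) ⟪F q, uA q⟫`.
-/

open Real Topology
open scoped RealInnerProductSpace

lemma norm_uvec (θ : ℝ) : ‖uvec θ‖ = 1 := by
  simp [uvec, EuclideanSpace.norm_eq, Fin.sum_univ_two]

@[fun_prop]
lemma continuous_uvec : Continuous uvec := by
  unfold uvec; fun_prop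

lemma inner_uvec_uvec (α θ : ℝ) : ⟪uvec α, uvec θ⟫ = cos (θ - α) := by
  simp only [uvec, PiLp.inner_apply, Fin.sum_univ_two, RCLike.inner_apply, conj_trivial]
  simp [cos_sub]

lemma uvec_add (ψ α : ℝ) : uvec (ψ + α) = cos ψ • uvec α + sin ψ • uperp α := by
  ext j
  fin_cases j <;> simp [uvec, uperp, cos_add, sin_add] <;> ring

lemma uvec_periodic : Function.Periodic uvec (2 * π) := fun θ => by
  simp [uvec]

lemma exists_eq_uvec {u : V2} (hu : ‖u‖ = 1) : ∃ α, u = uvec α := by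
  obtain ⟨α, hα⟩ := (Complex.norm_eq_one_iff ⟨u 0, u 1⟩).1 (by
    simpa [Complex.norm_def, Complex.normSq_mk, EuclideanSpace.norm_eq, Fin.sum_univ_two, ← sq]
      using hu)
  refine ⟨α, ?_⟩
  ext j
  fin_cases j
  · simpa [uvec] using congrArg Complex.re hα.symm
  · simpa [uvec] using congrArg Complex.im hα.symm

lemma countable_setOf_cos_eq (c : ℝ) : {θ : ℝ | cos θ = c}.Countable := by
  rcases eq_empty_or_nonempty {θ : ℝ | cos θ = c} with h | ⟨θ₀, hθ₀⟩
  · simp [h]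
  refine ((countable_range fun k : ℤ => 2 * k * π + θ₀).union
    (countable_range fun k : ℤ => 2 * k * π - θ₀)).mono fun θ hθ => ?_
  obtain ⟨k, hk | hk⟩ := cos_eq_cos_iff.1 (hθ₀.trans hθ.symm)
  exacts [Or.inl ⟨k, hk.symm⟩, Or.inr ⟨k, hk.symm⟩]

lemma ae_inner_uvec_ne {v : V2} (hv : ‖v‖ = 1) (c : ℝ) : ∀ᵐ θ, ⟪v, uvec θ⟫ ≠ c := by
  obtain ⟨β, rfl⟩ := exists_eq_uvec hv
  simp_rw [inner_uvec_uvec]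
  exact measure_eq_zero_iff_ae_notMem.1 <|
    ((countable_setOf_cos_eq c).preimage (sub_left_injective (b := β))).measure_zero _

section SymmetricIntegrals

variable {E : Type*} [NormedAddCommGroup E] [NormedSpace ℝ E] {f : ℝ → E}

lemma Function.Odd.intervalIntegral_eq_zero (hf : f.Odd) (a : ℝ) : ∫ x in -a..a, f x = 0 := by
  have h := intervalIntegral.integral_comp_neg (a := -a) (b := a) f
  simp only [hf _, intervalIntegral.integral_neg, neg_neg] at h
  have : IsAddTorsionFree E := .of_isTorsionFree ℝ E
  exact self_eq_neg.1 h.symm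

lemma Function.Even.intervalIntegral_eq_two_smul (hf : f.Even) {a : ℝ}
    (hint : IntervalIntegrable f volume (-a) a) :
    ∫ x in -a..a, f x = (2 : ℝ) • ∫ x in 0..a, f x := by
  have h0 : (0 : ℝ) ∈ uIcc (-a) a := by
    rcases le_total 0 a with h | h <;> exact ⟨by simp [h], by simp [h]⟩
  have hleft : ∫ x in -a..0, f x = ∫ x in 0..a, f x := by
    rw [← neg_zero, ← intervalIntegral.integral_comp_neg, neg_zero]
    simp only [hf _]
  rw [← intervalIntegral.integral_add_adjacent_intervals (b := 0)
    (hint.mono_set (uIcc_subset_uIcc_left h0)) (hint.mono_set (uIcc_subset_uIcc_right h0)),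
    hleft, two_smul]

end SymmetricIntegrals

lemma IntervalIntegrable.indicator {E : Type*} [NormedAddCommGroup E] {f : ℝ → E} {a b : ℝ}
    {μ : Measure ℝ} (hf : IntervalIntegrable f μ a b) {s : Set ℝ} (hs : MeasurableSet s) :
    IntervalIntegrable (s.indicator f) μ a b :=
  intervalIntegrable_iff.2 (hf.def'.indicator hs)

lemma integral_indicator_cap_cos {t : ℝ} (ht : t ^ 2 ≤ 1) :
    ∫ ψ in -π..π, {ψ | 0 ≤ t + cos ψ}.indicator cos ψ = 2 * √(1 - t ^ 2) := by
  obtain ⟨ht₁, ht₂⟩ := abs_le.1 ((sq_le_one_iff_abs_le_one t).1 ht)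
  set β := arccos (-t)
  have hβ : β ∈ Icc 0 π := ⟨arccos_nonneg _, arccos_le_pi _⟩
  have hcosβ : cos β = -t := cos_arccos (by linarith) (by linarith)
  have hcut : ∀ ψ ∈ Icc 0 π, 0 ≤ t + cos ψ ↔ ψ ≤ β := fun ψ hψ => by
    rw [← strictAntiOn_cos.le_iff_ge hβ hψ, hcosβ, neg_le_iff_add_nonneg']
  have hhalf : ∫ ψ in 0..π, {ψ | 0 ≤ t + cos ψ}.indicator cos ψ = √(1 - t ^ 2) := by
    rw [intervalIntegral.integral_congr (g := {ψ | ψ ≤ β}.indicator cos) fun ψ hψ => ?_,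
      intervalIntegral.integral_indicator hβ, integral_cos, sin_arccos, sin_zero, sub_zero, neg_sq]
    rw [uIcc_of_le pi_pos.le] at hψ
    simp only [indicator_apply, mem_ofPred_eq, hcut ψ hψ]
  have hmeas : MeasurableSet {ψ | 0 ≤ t + cos ψ} := measurableSet_le (by fun_prop) (by fun_prop)
  rw [Function.Even.intervalIntegral_eq_two_smul (fun ψ => by simp [indicator_apply])
    (continuous_cos.intervalIntegrable _ _ |>.indicator hmeas), hhalf, smul_eq_mul]

lemma integral_indicator_cap_sin (t : ℝ) :
    ∫ ψ in -π..π, {ψ | 0 ≤ t + cos ψ}.indicator sin ψ = 0 :=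
  Function.Odd.intervalIntegral_eq_zero (fun ψ => by
    simp only [indicator_apply, mem_ofPred_eq, cos_neg, sin_neg]
    split_ifs <;> simp) π

lemma integral_indicator_cap_inner_uvec {t : ℝ} (ht : t ^ 2 ≤ 1) {v : V2} (hv : ‖v‖ = 1) (f : V2) :
    ∫ θ in 0..2 * π, {θ | 0 ≤ t + ⟪v, uvec θ⟫}.indicator (fun θ => ⟪f, uvec θ⟫) θ
      = 2 * √(1 - t ^ 2) * ⟪f, v⟫ := by
  obtain ⟨β, rfl⟩ := exists_eq_uvec hv
  set g := {θ | 0 ≤ t + ⟪uvec β, uvec θ⟫}.indicator (fun θ => ⟪f, uvec θ⟫)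
  set C := {ψ | 0 ≤ t + cos ψ}
  have hC : MeasurableSet C := measurableSet_le (by fun_prop) (by fun_prop)
  have hper : Function.Periodic g (2 * π) := fun θ => by
    simp only [g, indicator_apply, mem_ofPred_eq, uvec_periodic θ]
  have hshift : ∀ ψ, g (ψ + β)
      = ⟪f, uvec β⟫ * C.indicator cos ψ + ⟪f, uperp β⟫ * C.indicator sin ψ := fun ψ => by
    simp only [g, C, indicator_apply, mem_ofPred_eq, inner_uvec_uvec, add_sub_cancel_right,
      uvec_add, inner_add_right, real_inner_smul_right]
    split_ifs <;> ring
  calc ∫ θ in 0..2 * π, g θ = ∫ θ in -π + β..π + β, g θ := by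
        simpa [show -π + β + 2 * π = π + β by ring] using hper.intervalIntegral_add_eq 0 (-π + β)
    _ = ∫ ψ in -π..π, g (ψ + β) := (intervalIntegral.integral_comp_add_right g β).symm
    _ = ⟪f, uvec β⟫ * (∫ ψ in -π..π, C.indicator cos ψ)
          + ⟪f, uperp β⟫ * ∫ ψ in -π..π, C.indicator sin ψ := by
        simp only [hshift]
        rw [intervalIntegral.integral_add
            (((continuous_cos.intervalIntegrable _ _).indicator hC).const_mul _)
            (((continuous_sin.intervalIntegrable _ _).indicator hC).const_mul _),
          intervalIntegral.integral_const_mul, intervalIntegral.integral_const_mul]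
    _ = 2 * √(1 - t ^ 2) * ⟪f, uvec β⟫ := by
        rw [integral_indicator_cap_cos ht, integral_indicator_cap_sin]; ring

lemma tanCone_mono {S T : Set V2} (h : S ⊆ T) (p : V2) : TanCone S p ⊆ TanCone T p :=
  fun _ ⟨ps, hps, hlim, hdir⟩ => ⟨ps, fun n => ⟨h (hps n).1, (hps n).2⟩, hlim, hdir⟩

lemma norCone_anti {S T : Set V2} (h : S ⊆ T) (p : V2) : NorCone T p ⊆ NorCone S p :=
  fun _ hw v hv => hw v (tanCone_mono h p hv)

lemma eventually_inner_le_of_mem_norCone {S : Set V2} {q w : V2} (hw : w ∈ NorCone S q)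
    {ε : ℝ} (hε : 0 < ε) : ∀ᶠ p in 𝓝 q, p ∈ S → ⟪w, p - q⟫ ≤ ε * ‖p - q‖ := by
  -- A violating sequence has a limiting direction in `TanCone S q` on which `w` is positive.
  by_contra h
  obtain ⟨p, hpq, hp⟩ := exists_seq_forall_of_frequently (not_eventually.1 h)
  simp only [Classical.not_imp, not_le] at hp
  have hne : ∀ n, p n - q ≠ 0 := fun n h0 => by simpa [h0] using (hp n).2
  set v := fun n => ‖p n - q‖⁻¹ • (p n - q)
  have hv : ∀ n, v n ∈ sphere (0 : V2) 1 := fun n => by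
    simp [v, norm_smul, hne n]
  obtain ⟨a, ha, φ, hφ, hva⟩ := (isCompact_sphere (0 : V2) 1).tendsto_subseq hv
  have ha1 : ‖a‖ = 1 := by simpa using ha
  have haT : a ∈ TanCone S q := by
    refine ⟨p ∘ φ, fun n => ⟨(hp _).1, sub_ne_zero.1 (hne _)⟩, hpq.comp hφ.tendsto_atTop, ?_⟩
    rwa [ha1, inv_one, one_smul]
  have hεv : ∀ n, ε ≤ ⟪w, v n⟫ := fun n => by
    rw [real_inner_smul_right, le_inv_mul_iff₀ (norm_pos_iff.2 (hne n)), mul_comm]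
    exact (hp n).2.le
  linarith [hw a haT, ge_of_tendsto' (tendsto_const_nhds.inner hva) fun n => hεv (φ n)]

lemma tendsto_add_smul_nhdsGT_zero (q d : V2) : Tendsto (fun r : ℝ => q + r • d) (𝓝[>] 0) (𝓝 q) :=
  ((continuous_const.add (continuous_id.smul continuous_const)).tendsto' 0 q (by simp)).mono_left
    nhdsWithin_le_nhds

lemma eventually_notMem_of_mem_norCone {S : Set V2} {q w d : V2} (hw : w ∈ NorCone S q)
    (hd : 0 < ⟪w, d⟫) : ∀ᶠ r in 𝓝[>] (0 : ℝ), q + r • d ∉ S := by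
  set ε := ⟪w, d⟫ / (‖d‖ + 1)
  have hε : 0 < ε := by positivity
  have hεd : ε * ‖d‖ < ⟪w, d⟫ := by
    rw [div_mul_eq_mul_div, div_lt_iff₀ (by positivity)]
    nlinarith [norm_nonneg d]
  filter_upwards [self_mem_nhdsWithin,
    (tendsto_add_smul_nhdsGT_zero q d).eventually (eventually_inner_le_of_mem_norCone hw hε)]
    with r (hr : 0 < r) h hS
  have := h hS
  rw [add_sub_cancel_left, real_inner_smul_right, norm_smul, Real.norm_of_nonneg hr.le] at this
  nlinarith

lemma tendsto_indicator_of_mem_norCone {B : Set V2} {q v d : V2} {G : V2 → ℝ}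
    (hG : ContinuousWithinAt G B q) (hvB : -v ∈ NorCone B q) (hvBc : v ∈ NorCone Bᶜ q)
    (hd : ⟪v, d⟫ ≠ 0) :
    Tendsto (fun r : ℝ => B.indicator G (q + r • d)) (𝓝[>] 0)
      (𝓝 (if 0 ≤ ⟪v, d⟫ then G q else 0)) := by
  rcases hd.lt_or_gt with hneg | hpos
  · rw [if_neg hneg.not_ge]
    have hout := eventually_notMem_of_mem_norCone hvB (by rwa [inner_neg_left, neg_pos])
    exact tendsto_const_nhds.congr' (hout.mono fun r hr => (indicator_of_notMem hr G).symm)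
  · rw [if_pos hpos.le]
    have hin : ∀ᶠ r in 𝓝[>] (0 : ℝ), q + r • d ∈ B :=
      (eventually_notMem_of_mem_norCone hvBc hpos).mono fun r hr => not_not.1 hr
    have hlim := tendsto_nhdsWithin_iff.2 ⟨tendsto_add_smul_nhdsGT_zero q d, hin⟩
    exact (hG.tendsto.comp hlim).congr' (hin.mono fun r hr => (indicator_of_mem hr G).symm)

lemma eventually_dist_circle_le (q u : V2) (s : ℝ) {ρ : ℝ} (hρ : 0 < ρ) :
    ∀ᶠ r in 𝓝[>] (0 : ℝ), ∀ θ, dist (q + (r * s) • u + r • uvec θ) q ≤ ρ := by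
  have hlim : Tendsto (fun r : ℝ => r * (|s| * ‖u‖ + 1)) (𝓝 0) (𝓝 0) := by
    simpa using (tendsto_id (x := 𝓝 (0 : ℝ))).mul_const (|s| * ‖u‖ + 1)
  filter_upwards [self_mem_nhdsWithin, nhdsWithin_le_nhds (hlim.eventually (ge_mem_nhds hρ))]
    with r (hr : 0 < r) hrρ θ
  calc dist (q + (r * s) • u + r • uvec θ) q = r * ‖s • u + uvec θ‖ := by
        rw [dist_eq_norm, add_assoc, add_sub_cancel_left, mul_smul, ← smul_add, norm_smul,
          Real.norm_of_nonneg hr.le]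
    _ ≤ r * (|s| * ‖u‖ + 1) := by
        gcongr
        calc ‖s • u + uvec θ‖ ≤ ‖s • u‖ + ‖uvec θ‖ := norm_add_le _ _
          _ = |s| * ‖u‖ + 1 := by rw [norm_smul, norm_uvec, Real.norm_eq_abs]
    _ ≤ ρ := hrρ

lemma tendsto_integral_indicator_circle {B : Set V2} (hB : IsClosed B) {q : V2} (hqB : q ∈ B)
    {ρ : ℝ} (hρ : 0 < ρ) {F : V2 → V2} (hFm : Measurable F)
    (hF : ContinuousOn F (B ∩ closedBall q ρ)) {v : V2} (hv : ‖v‖ = 1)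
    (hvB : -v ∈ NorCone B q) (hvBc : v ∈ NorCone Bᶜ q) (s : ℝ) (u : V2) (a b : ℝ) :
    Tendsto (fun r : ℝ => ∫ θ in a..b,
        B.indicator (fun x => ⟪F x, uvec θ⟫) (q + (r * s) • u + r • uvec θ)) (𝓝[>] 0)
      (𝓝 (∫ θ in a..b, {θ | 0 ≤ ⟪v, s • u + uvec θ⟫}.indicator (fun θ => ⟪F q, uvec θ⟫) θ)) := by
  obtain ⟨M, hM⟩ := ((isCompact_closedBall q ρ).inter_left hB).exists_bound_of_continuousOn hF
  have hM0 : 0 ≤ M := (norm_nonneg _).trans (hM q ⟨hqB, mem_closedBall_self hρ.le⟩)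
  refine intervalIntegral.tendsto_integral_filter_of_dominated_convergence (fun _ => M)
    (Eventually.of_forall fun r => ?_) ?_ intervalIntegrable_const ?_
  · have hx : Continuous fun θ => q + (r * s) • u + r • uvec θ := by fun_prop
    exact (Measurable.ite (hB.measurableSet.preimage hx.measurable)
      ((hFm.comp hx.measurable).inner continuous_uvec.measurable)
      measurable_const).aestronglyMeasurable
  · filter_upwards [eventually_dist_circle_le q u s hρ] with r hr
    refine ae_of_all _ fun θ _ => ?_
    by_cases hxB : q + (r * s) • u + r • uvec θ ∈ B
    · rw [indicator_of_mem hxB, Real.norm_eq_abs]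
      calc |⟪F _, uvec θ⟫| ≤ ‖F _‖ * ‖uvec θ‖ := abs_real_inner_le_norm _ _
        _ ≤ M := by rw [norm_uvec, mul_one]; exact hM _ ⟨hxB, hr θ⟩
    · rwa [indicator_of_notMem hxB, norm_zero]
  · have hFq : ContinuousWithinAt F B q := (continuousWithinAt_inter
      (closedBall_mem_nhds q hρ)).1 (hF _ ⟨hqB, mem_closedBall_self hρ.le⟩)
    filter_upwards [ae_inner_uvec_ne hv (-(s * ⟪v, u⟫))] with θ hθ _
    have hd : ⟪v, s • u + uvec θ⟫ ≠ 0 := by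
      rw [inner_add_right, real_inner_smul_right]
      contrapose! hθ
      linarith
    simpa only [indicator_apply, mem_ofPred_eq, mul_smul, smul_add, add_assoc] using
      tendsto_indicator_of_mem_norCone (hFq.inner continuousWithinAt_const) hvB hvBc hd

lemma isClosed_bset {A : Set V2} (hA : IsClosed A) (i : ℕ) : IsClosed (Bset A i) := by
  unfold Bset
  split_ifs
  exacts [hA, isClosed_closure]

lemma frontier_subset_bset {A : Set V2} (hA : IsClosed A) (i : ℕ) : frontier A ⊆ Bset A i := by
  unfold Bset
  split_ifs
  · exact hA.frontier_subset
  · exact frontier_compl A ▸ frontier_subset_closure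

lemma RegularAt.mem_norCone_bset {A : Set V2} {uA : V2 → V2} {q : V2} (hq : RegularAt A uA q)
    {i : ℕ} (hi : i = 1 ∨ i = 2) :
    -((-1 : ℝ) ^ i • uA q) ∈ NorCone (Bset A i) q ∧
      (-1 : ℝ) ^ i • uA q ∈ NorCone (Bset A i)ᶜ q := by
  obtain ⟨-, -, hA, hAc⟩ := hq
  have hu : uA q ∈ NorCone A q := hA ▸ ⟨1, zero_le_one, (one_smul ℝ _).symm⟩
  have hu' : -uA q ∈ NorCone (closure Aᶜ) q := hAc ▸ ⟨1, zero_le_one, by rw [one_smul]⟩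
  rcases hi with rfl | rfl
  · simp only [Bset, if_true, pow_one, neg_one_smul, neg_neg]
    exact ⟨hu, norCone_anti subset_closure q hu'⟩
  · simp only [Bset, OfNat.ofNat_ne_one, if_false, neg_one_sq, one_smul]
    exact ⟨hu', norCone_anti (by rw [closure_compl, compl_compl]; exact interior_subset) q hu⟩

/-- Pointwise limit of the normalized circle flux at `H¹`-a.e.
boundary point. -/
theorem circle_flux_limit
    (A : Set V2) (uA : V2 → V2) (hA : IsJordanDomain A) (hreg : LipschitzRegular A uA)
    (i : ℕ) (hi : i = 1 ∨ i = 2) (r₀ : ℝ) (hr₀ : 0 < r₀) (F : V2 → V2)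
    (hFmeas : Measurable F)
    (hFcont : ContinuousOn F (Bset A i ∩ Metric.cthickening r₀ (frontier A))) :
    ∃ N : Set V2, μH[1] N = 0 ∧ ∀ q ∈ frontier A, q ∉ N → ∀ s ∈ Set.Icc (-1:ℝ) 1,
      Tendsto (fun r : ℝ => r⁻¹ * GD A uA F i r s q) (nhdsWithin 0 (Set.Ioi 0))
        (nhds ((-1:ℝ)^i * (2 * Real.sqrt (1 - s^2)) * (inner ℝ (F q) (uA q) : ℝ))) := by
  refine ⟨{q | q ∈ frontier A ∧ ¬ RegularAt A uA q}, hreg.2.2, fun q hq hqN s hs => ?_⟩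
  have hq_reg : RegularAt A uA q := not_not.1 fun h => hqN ⟨hq, h⟩
  set σ : ℝ := (-1) ^ i
  have hσ : σ ^ 2 = 1 := by rw [← pow_mul, mul_comm, pow_mul, neg_one_sq, one_pow]
  have hv : ‖σ • uA q‖ = 1 := by simp [σ, norm_smul, hq_reg.1]
  have hcut : ∀ θ, ⟪σ • uA q, s • uA q + uvec θ⟫ = σ * s + ⟪σ • uA q, uvec θ⟫ := fun θ => by
    rw [inner_add_right, real_inner_smul_right, real_inner_smul_left, real_inner_self_eq_norm_sq,
      hq_reg.1]
    ring
  obtain ⟨hvB, hvBc⟩ := hq_reg.mem_norCone_bset hi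
  have hlim := tendsto_integral_indicator_circle (isClosed_bset hA.1.isClosed i)
    (frontier_subset_bset hA.1.isClosed i hq) hr₀ hFmeas
    (hFcont.mono (inter_subset_inter_right _ (closedBall_subset_cthickening hq r₀)))
    hv hvB hvBc s (uA q) 0 (2 * π)
  simp only [hcut] at hlim
  have hσs : (σ * s) ^ 2 ≤ 1 := by rw [mul_pow, hσ]; nlinarith [hs.1, hs.2]
  rw [integral_indicator_cap_inner_uvec hσs hv, mul_pow, hσ, one_mul, real_inner_smul_right] at hlim
  rw [show σ * (2 * √(1 - s ^ 2)) * ⟪F q, uA q⟫ = 2 * √(1 - s ^ 2) * (σ * ⟪F q, uA q⟫) by ring]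
  refine hlim.congr' (eventually_nhdsWithin_of_forall fun r (hr : 0 < r) => ?_)
  exact (inv_mul_cancel_left₀ hr.ne' _).symm
end

section
/- Let R ⊆ ℝ² be a compact convex set with nonempty interior whose boundary ∂R is strictly convex, i.e. ∂R contains no nondegenerate line segment. Then for any two distinct points p₁ ≠ p₂ in ℝ², the translated boundaries intersect in a set of 1-dimensional Hausdorff measure zero: H¹((∂R + p₁) ∩ (∂R + p₂)) = 0. -/
/-!
Put `v = p₁ - p₂`. A point of the intersection is `b + p₁` with `b` and `b + v` both on `∂R`.
In the plane pick a linear functional `φ` with kernel `ℝ v`. Strict convexity of the boundary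
means a frontier point never lies strictly between two points of `closure R`; hence the chord
`[b, b + v]` is the only translate of itself along `v` inside `closure R`, so `φ` is injective
on such `b`. Three of them with `φ a < φ b < φ c` are impossible: the convex combination of `a`
and `c` on the level `φ = φ b` lies, together with its translate by `v`, in `closure R`, so it
equals `b`, which then lies strictly between `a` and `c`. So there are at most two such `b`.
-/

open MeasureTheory Set

open Module Submodule

variable {𝕜 E : Type*} [Field 𝕜] [AddCommGroup E] [Module 𝕜 E]

theorem exists_ker_eq_span_singleton (hE : finrank 𝕜 E = 2) {v : E} (hv : v ≠ 0) :
    ∃ φ : E →ₗ[𝕜] 𝕜, LinearMap.ker φ = 𝕜 ∙ v := by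
  have : Module.Finite 𝕜 E := Module.finite_of_finrank_eq_succ hE
  have hquot : finrank 𝕜 (E ⧸ 𝕜 ∙ v) = finrank 𝕜 𝕜 := by
    have := (𝕜 ∙ v).finrank_quotient_add_finrank
    rw [finrank_span_singleton hv, hE] at this
    rw [finrank_self]
    omega
  refine ⟨(LinearEquiv.ofFinrankEq _ _ hquot).toLinearMap ∘ₗ (𝕜 ∙ v).mkQ, ?_⟩
  rw [LinearEquiv.ker_comp, ker_mkQ]

variable [LinearOrder 𝕜] [IsStrictOrderedRing 𝕜]

theorem add_smul_mem_openSegment (b v : E) {s t u : 𝕜} (hst : s < t) (htu : t < u) :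
    b + t • v ∈ openSegment 𝕜 (b + s • v) (b + u • v) := by
  have hsu : 0 < u - s := by linarith
  refine ⟨(u - t) / (u - s), (t - s) / (u - s), div_pos (by linarith) hsu,
    div_pos (by linarith) hsu, by field_simp; ring, ?_⟩
  match_scalars <;> field_simp <;> ring

variable [TopologicalSpace E] [IsTopologicalAddGroup E] [ContinuousConstSMul 𝕜 E]

variable (𝕜) in
def NoSegmentInFrontier (R : Set E) : Prop :=
  ∀ x ∈ frontier R, ∀ y ∈ frontier R, x ≠ y → ¬segment 𝕜 x y ⊆ frontier R

def chordSet (R : Set E) (v : E) : Set E :=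
  {b | b ∈ frontier R ∧ b + v ∈ frontier R}

variable {R : Set E}

theorem Convex.segment_subset_frontier_of_mem_openSegment (hR : Convex 𝕜 R) {p q r : E}
    (hp : p ∈ closure R) (hr : r ∈ closure R) (hq : q ∈ frontier R)
    (hqpr : q ∈ openSegment 𝕜 p r) : segment 𝕜 p r ⊆ frontier R := by
  intro w hw
  refine ⟨hR.closure.segment_subset hp hr hw, fun hwR => hq.2 ?_⟩
  rw [segment_eq_image_lineMap] at hw
  rcases openSegment_subset_union p r (mem_range_of_mem_image _ _ hw) hqpr with
    rfl | hpw | hwr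
  exacts [hwR, hR.openSegment_closure_interior_subset_interior hp hwR hpw,
    hR.openSegment_interior_closure_subset_interior hwR hr hwr]

namespace NoSegmentInFrontier

variable (hS : NoSegmentInFrontier 𝕜 R) (hR : Convex 𝕜 R)
include hS hR

theorem notMem_openSegment {p q r : E} (hp : p ∈ closure R) (hr : r ∈ closure R)
    (hpr : p ≠ r) (hq : q ∈ frontier R) : q ∉ openSegment 𝕜 p r := fun hqpr =>
  have hseg := hR.segment_subset_frontier_of_mem_openSegment hp hr hq hqpr
  hS p (hseg (left_mem_segment 𝕜 p r)) r (hseg (right_mem_segment 𝕜 p r)) hpr hseg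

theorem mem_Icc_of_add_smul_mem_closure {v b : E} (hv : v ≠ 0) (hb : b ∈ chordSet R v)
    {s : 𝕜} (hs : b + s • v ∈ closure R) : s ∈ Icc 0 1 := by
  have hne {s' : 𝕜} (h : s ≠ s') : b + s • v ≠ b + s' • v :=
    fun h' => h (smul_left_injective 𝕜 hv (add_left_cancel h'))
  have hb₀ : b + (0 : 𝕜) • v ∈ frontier R := by rw [zero_smul, add_zero]; exact hb.1
  have hb₁ : b + (1 : 𝕜) • v ∈ frontier R := by rw [one_smul]; exact hb.2
  constructor
  · by_contra! hs0
    exact notMem_openSegment hS hR hs (frontier_subset_closure hb₁) (hne (by linarith)) hb₀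
      (add_smul_mem_openSegment b v hs0 one_pos)
  · by_contra! hs1
    exact notMem_openSegment hS hR (frontier_subset_closure hb₀) hs (hne (by linarith)).symm
      hb₁ (add_smul_mem_openSegment b v one_pos hs1)

theorem eq_of_sub_mem_span {v b c : E} (hv : v ≠ 0) (hb : b ∈ chordSet R v)
    (hc : c ∈ closure R) (hcv : c + v ∈ closure R) (hcb : c - b ∈ 𝕜 ∙ v) : c = b := by
  obtain ⟨t, ht⟩ := mem_span_singleton.mp hcb
  have hc' : c = b + t • v := by rw [ht]; abel
  have ht₀ := (mem_Icc_of_add_smul_mem_closure hS hR hv hb (hc' ▸ hc)).1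
  have ht₁ : t + 1 ≤ 1 := (mem_Icc_of_add_smul_mem_closure hS hR hv hb
    (s := t + 1) (by rw [add_smul, one_smul, ← add_assoc, ← hc']; exact hcv)).2
  rw [hc', le_antisymm (by linarith) ht₀, zero_smul, add_zero]

variable {φ : E →ₗ[𝕜] 𝕜} {v : E} (hv : v ≠ 0) (hφ : LinearMap.ker φ ≤ 𝕜 ∙ v)
include hv hφ

theorem injOn_chordSet : InjOn φ (chordSet R v) := fun _ hb _ hc hbc =>
  eq_of_sub_mem_span hS hR hv hc (frontier_subset_closure hb.1) (frontier_subset_closure hb.2)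
    (hφ (by rw [LinearMap.mem_ker, map_sub, hbc, sub_self]))

theorem not_lt_lt_of_mem_chordSet {a b c : E} (ha : a ∈ chordSet R v) (hb : b ∈ chordSet R v)
    (hc : c ∈ chordSet R v) (hab : φ a < φ b) (hbc : φ b < φ c) : False := by
  have hac : 0 < φ c - φ a := by linarith
  set l := (φ c - φ b) / (φ c - φ a)
  have hl₀ : 0 < l := div_pos (by linarith) hac
  have hl₁ : 0 < 1 - l := by rw [sub_pos, div_lt_one hac]; linarith
  have hcomb : φ (l • a + (1 - l) • c) = φ b := by
    simp only [map_add, map_smul, smul_eq_mul, l]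
    field_simp
    ring
  have hclosure {x y : E} (hx : x ∈ frontier R) (hy : y ∈ frontier R) :
      l • x + (1 - l) • y ∈ closure R :=
    hR.closure (frontier_subset_closure hx) (frontier_subset_closure hy) hl₀.le hl₁.le
      (by ring)
  have hmid : l • a + (1 - l) • c = b := by
    refine eq_of_sub_mem_span hS hR hv hb (hclosure ha.1 hc.1) ?_
      (hφ (by rw [LinearMap.mem_ker, map_sub, hcomb, sub_self]))
    convert hclosure ha.2 hc.2 using 1
    module
  exact notMem_openSegment hS hR (frontier_subset_closure ha.1) (frontier_subset_closure hc.1)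
    (fun h => hac.ne' (by rw [h, sub_self])) hb.1 ⟨l, 1 - l, hl₀, hl₁, by ring, hmid⟩

end NoSegmentInFrontier

theorem NoSegmentInFrontier.finite_chordSet (hS : NoSegmentInFrontier 𝕜 R) (hR : Convex 𝕜 R)
    (hE : finrank 𝕜 E = 2) {v : E} (hv : v ≠ 0) : (chordSet R v).Finite := by
  obtain ⟨φ, hφ⟩ := exists_ker_eq_span_singleton hE hv
  refine Finite.of_finite_image ?_ (hS.injOn_chordSet hR hv hφ.le)
  refine finite_of_forall_not_lt_lt ?_
  rintro _ ⟨a, ha, rfl⟩ _ ⟨b, hb, rfl⟩ _ ⟨c, hc, rfl⟩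
  exact hS.not_lt_lt_of_mem_chordSet hR hv hφ.le ha hb hc

theorem strictly_convex_boundary_translates_null_general
    (R : Set V2) (hconv : Convex ℝ R)
    (hstrict : ∀ x ∈ frontier R, ∀ y ∈ frontier R, x ≠ y →
      ¬ segment ℝ x y ⊆ frontier R)
    (p₁ p₂ : V2) (hne : p₁ ≠ p₂) :
    μH[1] (((· + p₁) '' frontier R) ∩ ((· + p₂) '' frontier R)) = 0 := by
  have := Measure.nullSingletonClass_hausdorff V2 one_pos
  have hfin : (chordSet R (p₁ - p₂)).Finite :=
    NoSegmentInFrontier.finite_chordSet hstrict hconv finrank_euclideanSpace_fin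
      (sub_ne_zero.mpr hne)
  refine measure_mono_null ?_ ((hfin.image (· + p₁)).measure_zero _)
  rintro _ ⟨⟨a, ha, rfl⟩, b, hb, hab : b + p₂ = a + p₁⟩
  refine ⟨a, ⟨ha, ?_⟩, rfl⟩
  rwa [← add_sub_assoc, ← hab, add_sub_cancel_right]

/-- If `R ⊆ ℝ²` is a compact convex body whose boundary contains no
nondegenerate line segment, then any two distinct translates of its boundary meet in
an `H¹`-null set. -/
theorem strictly_convex_boundary_translates_null
    (R : Set V2) (hcomp : IsCompact R) (hconv : Convex ℝ R)
    (hint : (interior R).Nonempty)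
    (hstrict : ∀ x ∈ frontier R, ∀ y ∈ frontier R, x ≠ y →
      ¬ segment ℝ x y ⊆ frontier R)
    (p₁ p₂ : V2) (hne : p₁ ≠ p₂) :
    μH[1] (((· + p₁) '' frontier R) ∩ ((· + p₂) '' frontier R)) = 0 :=
  strictly_convex_boundary_translates_null_general R hconv hstrict p₁ p₂ hne
end
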